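/- Let e(n) be the number of conjugacy classes of elementary abelian 2-subgroups of the symmetric group S_n. Then log₂ e(n) ≥ (n−3)²/16 − n/4 − n·log₂ n. -/
import Mathlib

open Pointwise

/-- The permutation of `I × ZMod 2` adding `w i` in the second coordinate. -/
def permOfVec {I : Type*} (w : I → ZMod 2) : Equiv.Perm (I × ZMod 2) where
  toFun p := (p.1, p.2 + w p.1)
  invFun p := (p.1, p.2 + w p.1)
  left_inv p := by
    simp only [add_assoc, CharTwo.add_self_eq_zero, add_zero]
  right_inv p := by
    simp only [add_assoc, CharTwo.add_self_eq_zero, add_zero]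

/-- `permOfVec` as a monoid hom. -/
def permHomOfVec (I : Type*) : Multiplicative (I → ZMod 2) →* Equiv.Perm (I × ZMod 2) where
  toFun w := permOfVec (Multiplicative.toAdd w)
  map_one' := by
    apply Equiv.ext
    intro p
    simp [permOfVec]
  map_mul' w v := by
    apply Equiv.ext
    intro p
    apply Prod.ext
    · rfl
    · show p.2 + (Multiplicative.toAdd w p.1 + Multiplicative.toAdd v p.1)
        = p.2 + Multiplicative.toAdd v p.1 + Multiplicative.toAdd w p.1
      ring

lemma permHomOfVec_injective (I : Type*) : Function.Injective (permHomOfVec I) := by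
  intro w v h
  have h2 : ∀ i : I, Multiplicative.toAdd w i = Multiplicative.toAdd v i := by
    intro i
    have := congrArg (fun σ : Equiv.Perm (I × ZMod 2) => (σ (i, 0)).2) h
    simpa [permHomOfVec, permOfVec] using this
  have : Multiplicative.toAdd w = Multiplicative.toAdd v := funext h2
  exact Multiplicative.toAdd.injective this

/-- Combine a pair of vectors into a vector on the sum type, as an additive hom. -/
def sumElimAddHom (a b : ℕ) :
    ((Fin a → ZMod 2) × (Fin b → ZMod 2)) →+ ((Fin a ⊕ Fin b) → ZMod 2) where
  toFun p := Sum.elim p.1 p.2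
  map_zero' := by ext (i | i) <;> rfl
  map_add' p q := by ext (i | i) <;> rfl

lemma sumElimAddHom_injective (a b : ℕ) : Function.Injective (sumElimAddHom a b) := by
  intro p q h
  have h1 : ∀ i, Sum.elim p.1 p.2 i = Sum.elim q.1 q.2 i := fun i => congrFun h i
  refine Prod.ext (funext fun i => h1 (Sum.inl i)) (funext fun i => h1 (Sum.inr i))

lemma graph_injective {R M N : Type*} [Ring R] [AddCommGroup M] [AddCommGroup N]
    [Module R M] [Module R N] :
    Function.Injective (LinearMap.graph : (M →ₗ[R] N) → Submodule R (M × N)) := by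
  intro f g h
  ext x
  have : ((x, f x) : M × N) ∈ g.graph := by
    rw [← h]
    exact (LinearMap.mem_graph_iff f _).mpr rfl
  exact (LinearMap.mem_graph_iff g _).mp this

lemma count_lower (n a b : ℕ) (h : 2 * (a + b) ≤ n) :
    2 ^ (a * b) ≤ Nat.card (Equiv.Perm (Fin n)) *
    (Set.ncard {Q : Quotient (MulAction.orbitRel (ConjAct (Equiv.Perm (Fin n)))
          (Subgroup (Equiv.Perm (Fin n)))) |
        ∃ E : Subgroup (Equiv.Perm (Fin n)), (∀ x ∈ E, x ^ 2 = 1) ∧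
          Q = Quotient.mk (MulAction.orbitRel (ConjAct (Equiv.Perm (Fin n)))
                (Subgroup (Equiv.Perm (Fin n)))) E}) := by
  classical
  set G := Equiv.Perm (Fin n) with hG
  -- an embedding of the underlying set into `Fin n`
  have hcard : Fintype.card ((Fin a ⊕ Fin b) × ZMod 2) ≤ Fintype.card (Fin n) := by
    simp [ZMod.card]
    omega
  obtain ⟨e⟩ := Function.Embedding.nonempty_of_card_le hcard
  -- the injective homomorphism
  set φ : Multiplicative ((Fin a → ZMod 2) × (Fin b → ZMod 2)) →* G :=
    (Equiv.Perm.viaEmbeddingHom e).comp ((permHomOfVec (Fin a ⊕ Fin b)).comp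
      (AddMonoidHom.toMultiplicative (sumElimAddHom a b))) with hφdef
  have hφ : Function.Injective φ := by
    apply (Equiv.Perm.viaEmbeddingHom_injective e).comp
    apply (permHomOfVec_injective _).comp
    intro x y hxy
    exact sumElimAddHom_injective a b hxy
  -- the family of subgroups indexed by linear maps
  set F : ((Fin a → ZMod 2) →ₗ[ZMod 2] (Fin b → ZMod 2)) → Subgroup G :=
    fun A => Subgroup.map φ (AddSubgroup.toSubgroup A.graph.toAddSubgroup) with hFdef
  have hF : Function.Injective F := by
    intro A B hAB
    apply graph_injective
    apply Submodule.toAddSubgroup_injective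
    apply AddSubgroup.toSubgroup.injective
    exact Subgroup.map_injective hφ hAB
  set S : Set (Subgroup G) := {E | ∀ x ∈ E, x ^ 2 = 1} with hSdef
  have hFmem : ∀ A, F A ∈ S := by
    intro A x hx
    obtain ⟨v, -, rfl⟩ := Subgroup.mem_map.mp hx
    rw [← map_pow]
    have hv : v ^ 2 = 1 := by
      apply Multiplicative.toAdd.injective
      rw [sq, toAdd_mul, toAdd_one]
      ext i <;> simp [CharTwo.add_self_eq_zero]
    rw [hv, map_one]
  have hSfin : S.Finite := Set.toFinite S
  -- first count : many subgroups
  have hcount1 : 2 ^ (a * b) ≤ S.ncard := by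
    have h1 : Nat.card ((Fin a → ZMod 2) →ₗ[ZMod 2] (Fin b → ZMod 2)) = 2 ^ (a * b) := by
      rw [Nat.card_congr (LinearMap.toMatrix' (R := ZMod 2)
        (m := Fin b) (n := Fin a)).toEquiv]
      simp only [Nat.card_eq_fintype_card]
      have : Fintype.card (Matrix (Fin b) (Fin a) (ZMod 2))
          = Fintype.card (Fin b → Fin a → ZMod 2) :=
        Fintype.card_congr (Equiv.refl _)
      rw [this]
      simp [Fintype.card_fun, ZMod.card, ← pow_mul, Nat.mul_comm]
    calc 2 ^ (a * b) = Nat.card ((Fin a → ZMod 2) →ₗ[ZMod 2] (Fin b → ZMod 2)) := h1.symm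
      _ = (Set.range F).ncard := by
          rw [← Nat.card_coe_set_eq, Nat.card_range_of_injective hF]
      _ ≤ S.ncard := Set.ncard_le_ncard (Set.range_subset_iff.mpr hFmem) hSfin
  -- second count : fibers of the quotient map are small
  set q : Subgroup G → Quotient (MulAction.orbitRel (ConjAct G) (Subgroup G)) :=
    Quotient.mk (MulAction.orbitRel (ConjAct G) (Subgroup G)) with hqdef
  haveI : Fintype (ConjAct G) := Fintype.ofEquiv G ConjAct.toConjAct.toEquiv
  have hcount2 : S.ncard ≤ Nat.card G * (q '' S).ncard := by
    set s : Finset (Subgroup G) := hSfin.toFinset with hs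
    have hfiber : ∀ Q ∈ s.image q, (s.filter (fun E => q E = Q)).card ≤ Nat.card G := by
      intro Q hQ
      obtain ⟨E₀, -, hE₀⟩ := Finset.mem_image.mp hQ
      have hsub : s.filter (fun E => q E = Q) ⊆
          Finset.image (fun g : ConjAct G => g • E₀) Finset.univ := by
        intro E hE
        obtain ⟨-, hE2⟩ := Finset.mem_filter.mp hE
        have horb : E ∈ MulAction.orbit (ConjAct G) E₀ :=
          MulAction.orbitRel_apply.mp (Quotient.exact (hE2.trans hE₀.symm))
        obtain ⟨g, hg⟩ := horb
        exact Finset.mem_image.mpr ⟨g, Finset.mem_univ g, hg⟩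
      calc (s.filter (fun E => q E = Q)).card ≤ _ := Finset.card_le_card hsub
        _ ≤ Fintype.card (ConjAct G) := Finset.card_image_le.trans (by simp)
        _ = Nat.card G := by
            rw [← Nat.card_eq_fintype_card]
            exact Nat.card_congr ConjAct.ofConjAct.toEquiv
    have hmain := Finset.card_le_mul_card_image (f := q) s (Nat.card G) hfiber
    have himg : (q '' S) = ↑(s.image q) := by
      rw [Finset.coe_image, hSfin.coe_toFinset]
    rw [Set.ncard_eq_toFinset_card _ hSfin, himg, Set.ncard_coe_finset]
    exact hmain
  -- identify the set in the statement with `q '' S`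
  have hset : {Q : Quotient (MulAction.orbitRel (ConjAct G) (Subgroup G)) |
        ∃ E : Subgroup G, (∀ x ∈ E, x ^ 2 = 1) ∧
          Q = Quotient.mk (MulAction.orbitRel (ConjAct G) (Subgroup G)) E} = q '' S := by
    ext Q
    simp only [Set.mem_setOf_eq, Set.mem_image, hSdef]
    constructor
    · rintro ⟨E, h1, rfl⟩; exact ⟨E, h1, rfl⟩
    · rintro ⟨E, h1, rfl⟩; exact ⟨E, h1, rfl⟩
  rw [hset]
  exact hcount1.trans hcount2

/-- The number `e n` of conjugacy classes of elementary abelian 2-subgroups of the symmetric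
group `S_n` satisfies `log₂ (e n) ≥ (n-3)²/16 - n/4 - n·log₂ n`. -/
theorem stmt3 (n : ℕ) (hn : 1 ≤ n) :
    ((n : ℝ) - 3) ^ 2 / 16 - (n : ℝ) / 4 - (n : ℝ) * Real.logb 2 (n : ℝ) ≤
    Real.logb 2
      (Set.ncard {Q : Quotient (MulAction.orbitRel (ConjAct (Equiv.Perm (Fin n)))
          (Subgroup (Equiv.Perm (Fin n)))) |
        ∃ E : Subgroup (Equiv.Perm (Fin n)), (∀ x ∈ E, x ^ 2 = 1) ∧
          Q = Quotient.mk (MulAction.orbitRel (ConjAct (Equiv.Perm (Fin n)))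
                (Subgroup (Equiv.Perm (Fin n)))) E}) := by
  set m := n / 2 with hm
  set k := m / 2 with hk
  set a := m - k with ha
  set b := k with hb
  have h2 : 2 * (a + b) ≤ n := by omega
  have key := count_lower n a b h2
  have hGcard : Nat.card (Equiv.Perm (Fin n)) = n.factorial := by
    simp [Nat.card_eq_fintype_card, Fintype.card_perm, Fintype.card_fin]
  rw [hGcard] at key
  set C : ℕ := Set.ncard {Q : Quotient (MulAction.orbitRel (ConjAct (Equiv.Perm (Fin n)))
          (Subgroup (Equiv.Perm (Fin n)))) |
        ∃ E : Subgroup (Equiv.Perm (Fin n)), (∀ x ∈ E, x ^ 2 = 1) ∧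
          Q = Quotient.mk (MulAction.orbitRel (ConjAct (Equiv.Perm (Fin n)))
                (Subgroup (Equiv.Perm (Fin n)))) E} with hC
  -- `C` is positive
  have hCpos : 0 < C := by
    rcases Nat.eq_zero_or_pos C with h0 | h0
    · rw [h0, Nat.mul_zero] at key
      exact absurd key (Nat.two_pow_pos _).not_ge
    · exact h0
  have hfacpos : (0:ℝ) < (n.factorial : ℝ) := by exact_mod_cast n.factorial_pos
  have hCR : (1:ℝ) ≤ (C:ℝ) := by exact_mod_cast hCpos
  have hkeyR : (2:ℝ) ^ (a * b) ≤ (n.factorial : ℝ) * (C:ℝ) := by exact_mod_cast key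
  have l1 : ((a * b : ℕ) : ℝ) ≤ Real.logb 2 (n.factorial) + Real.logb 2 C := by
    have h := Real.logb_le_logb_of_le (b := 2) one_lt_two (by positivity) hkeyR
    rw [Real.logb_mul (ne_of_gt hfacpos) (by linarith), Real.logb_pow,
      Real.logb_self_eq_one one_lt_two, mul_one] at h
    exact_mod_cast h
  have l2 : Real.logb 2 (n.factorial) ≤ (n:ℝ) * Real.logb 2 (n:ℝ) := by
    have h1 : ((n.factorial : ℕ) : ℝ) ≤ ((n:ℝ)) ^ n := by exact_mod_cast n.factorial_le_pow
    have h := Real.logb_le_logb_of_le (b := 2) one_lt_two hfacpos h1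
    rwa [Real.logb_pow] at h
  have l3 : ((n:ℝ) - 3) ^ 2 / 16 - (n:ℝ) / 4 ≤ ((a * b : ℕ) : ℝ) := by
    rcases eq_or_lt_of_le hn with h1 | h1
    · have hb0 : b = 0 := by omega
      have hab : a * b = 0 := by rw [hb0, Nat.mul_zero]
      rw [hab, ← h1]
      norm_num
    · have hA : n ≤ 2 * (a + b) + 1 := by omega
      have hB : b ≤ a := by omega
      have hC2 : a ≤ b + 1 := by omega
      have hAr : (n:ℝ) ≤ 2 * ((a:ℝ) + (b:ℝ)) + 1 := by exact_mod_cast hA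
      have hBr : (b:ℝ) ≤ (a:ℝ) := by exact_mod_cast hB
      have hC2r : (a:ℝ) ≤ (b:ℝ) + 1 := by exact_mod_cast hC2
      have hnr : (2:ℝ) ≤ (n:ℝ) := by exact_mod_cast h1
      have hbnn : (0:ℝ) ≤ (b:ℝ) := by positivity
      have prod1 : (0:ℝ) ≤ (2*(a:ℝ) + 2*(b:ℝ) + 1 - (n:ℝ)) * (2*(a:ℝ) + 2*(b:ℝ) + (n:ℝ) - 1) := by
        apply mul_nonneg <;> nlinarith
      have prod2 : (0:ℝ) ≤ ((a:ℝ) - (b:ℝ)) * (1 - ((a:ℝ) - (b:ℝ))) := by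
        apply mul_nonneg <;> linarith
      push_cast
      nlinarith [prod1, prod2]
  have hlog2 : Real.logb 2 (n.factorial * C : ℕ) = Real.logb 2 (n.factorial) + Real.logb 2 C := by
    push_cast
    exact Real.logb_mul (ne_of_gt hfacpos) (by linarith)
  linarith [l1, l2, l3]
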